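/- Let P = |0_L⟩⟨0_L| + |1_L⟩⟨1_L| be the projector onto the span of |0_L⟩ = (|0000⟩+|1111⟩)/√2 and |1_L⟩ = (|1100⟩+|0011⟩)/√2 in (ℂ²)^{⊗4}, and let E be the single-qubit channel with Kraus operators E₀ = [[1,0],[0,f]], E₁ = [[0,√(1−|f|²)],[0,0]] for f = |f|e^{iΘ}. Then the 16×16 matrix E^{⊗4}(P), written in the computational basis, is diagonal except for the four entries coupling |0000⟩↔|1111⟩ and |1100⟩↔|0011⟩; moreover the off-diagonal entry ⟨0000| E^{⊗4}(P) |1111⟩ equals e^{−4iΘ} times a nonnegative real function of |f|, and ⟨1100| E^{⊗4}(P) |0011⟩ is a real function of |f| independent of Θ. -/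

import Mathlib

open Matrix ComplexConjugate

/-- Index set for the computational basis of four qubits. -/
abbrev Q4 : Type := Fin 2 × Fin 2 × Fin 2 × Fin 2

/-- The codeword `|0_L⟩ = (|0000⟩+|1111⟩)/√2` as a vector. -/
noncomputable def v0L : Q4 → ℂ := fun p =>
  ((Real.sqrt 2 : ℂ))⁻¹ *
    ((if p = ((0 : Fin 2), (0 : Fin 2), (0 : Fin 2), (0 : Fin 2)) then 1 else 0) +
     (if p = ((1 : Fin 2), (1 : Fin 2), (1 : Fin 2), (1 : Fin 2)) then 1 else 0))

/-- The codeword `|1_L⟩ = (|1100⟩+|0011⟩)/√2` as a vector. -/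
noncomputable def v1L : Q4 → ℂ := fun p =>
  ((Real.sqrt 2 : ℂ))⁻¹ *
    ((if p = ((1 : Fin 2), (1 : Fin 2), (0 : Fin 2), (0 : Fin 2)) then 1 else 0) +
     (if p = ((0 : Fin 2), (0 : Fin 2), (1 : Fin 2), (1 : Fin 2)) then 1 else 0))

/-- The projector `P = |0_L⟩⟨0_L| + |1_L⟩⟨1_L|` onto the four-qubit code. -/
noncomputable def projP : Matrix Q4 Q4 ℂ :=
  fun p q => v0L p * conj (v0L q) + v1L p * conj (v1L q)

/-- Fourfold tensor (Kronecker) product of `2 × 2` matrices, as a matrix on `Q4`. -/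
noncomputable def tens4 (A B C D : Matrix (Fin 2) (Fin 2) ℂ) : Matrix Q4 Q4 ℂ :=
  fun p q => A p.1 q.1 * B p.2.1 q.2.1 * C p.2.2.1 q.2.2.1 * D p.2.2.2 q.2.2.2

/-- The single-qubit Kraus operators of the state-transfer channel. -/
noncomputable def krausOp (f : ℂ) : Fin 2 → Matrix (Fin 2) (Fin 2) ℂ :=
  ![!![1, 0; 0, f], !![0, ((Real.sqrt (1 - ‖f‖ ^ 2) : ℝ) : ℂ); 0, 0]]

/-- The matrix `E^{⊗4}(P)`: the image of the code projector under the fourfold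
tensor power of the channel. -/
noncomputable def E4P (f : ℂ) : Matrix Q4 Q4 ℂ :=
  ∑ w : Q4,
    tens4 (krausOp f w.1) (krausOp f w.2.1) (krausOp f w.2.2.1) (krausOp f w.2.2.2)
      * projP *
    (tens4 (krausOp f w.1) (krausOp f w.2.1) (krausOp f w.2.2.1) (krausOp f w.2.2.2))ᴴ

/-!
Entry `(p, q)` of `E^{⊗4}(P)` is `∑_{c,c'} P_{c c'} ∏ᵢ T(cᵢ, c'ᵢ; pᵢ, qᵢ)`, where
`T(r, s; a, b)` (`transfer`) is the `(a, b)` entry of `E(|r⟩⟨s|)`. The channel maps `|r⟩⟨r|`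
to a diagonal matrix and `|r⟩⟨r̄|` to a multiple of itself (by `f̄` or `f`), while `P_{c c'} ≠ 0` forces
`c' = c` or `c' = c̄` (all bits flipped). Hence an off-diagonal entry `(p, q)` of `E^{⊗4}(P)`
receives only the term `P_{p q} ∏ᵢ T(pᵢ, qᵢ; pᵢ, qᵢ)`: it vanishes away from the four coherences
of `P`, and equals `f̄⁴ / 2` at `(0000, 1111)` and `|f|⁴ / 2` at `(1100, 0011)`.
-/

def transfer (K : Fin 2 → Matrix (Fin 2) (Fin 2) ℂ) (r s a b : Fin 2) : ℂ :=
  ∑ w, K w a r * conj (K w b s)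

def transfer4 (K : Fin 2 → Matrix (Fin 2) (Fin 2) ℂ) (c c' p q : Q4) : ℂ :=
  transfer K c.1 c'.1 p.1 q.1 * transfer K c.2.1 c'.2.1 p.2.1 q.2.1 *
    transfer K c.2.2.1 c'.2.2.1 p.2.2.1 q.2.2.1 * transfer K c.2.2.2 c'.2.2.2 p.2.2.2 q.2.2.2

def bitFlip (c : Q4) : Q4 := (c.1.rev, c.2.1.rev, c.2.2.1.rev, c.2.2.2.rev)

theorem transfer4_eq_sum (K : Fin 2 → Matrix (Fin 2) (Fin 2) ℂ) (c c' p q : Q4) :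
    transfer4 K c c' p q = ∑ w : Q4,
      tens4 (K w.1) (K w.2.1) (K w.2.2.1) (K w.2.2.2) p c *
        conj (tens4 (K w.1) (K w.2.1) (K w.2.2.1) (K w.2.2.2) q c') := by
  simp only [transfer4, transfer, tens4, Fintype.sum_prod_type, Fin.sum_univ_two, map_mul]
  ring

theorem sum_tens4_mul_mul_conjTranspose_apply (K : Fin 2 → Matrix (Fin 2) (Fin 2) ℂ)
    (X : Matrix Q4 Q4 ℂ) (p q : Q4) :
    (∑ w : Q4, tens4 (K w.1) (K w.2.1) (K w.2.2.1) (K w.2.2.2) * X *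
      (tens4 (K w.1) (K w.2.1) (K w.2.2.1) (K w.2.2.2))ᴴ) p q =
      ∑ c, ∑ c', X c c' * transfer4 K c c' p q := by
  simp only [Matrix.sum_apply, Matrix.mul_apply, Matrix.conjTranspose_apply, transfer4_eq_sum,
    Finset.sum_mul, Finset.mul_sum, starRingEnd_apply]
  conv_rhs => rw [Finset.sum_comm]
  rw [Finset.sum_comm]
  refine Finset.sum_congr rfl fun c' _ => ?_
  rw [Finset.sum_comm]
  exact Finset.sum_congr rfl fun c _ => Finset.sum_congr rfl fun w _ => by ring

theorem transfer_krausOp_diag_eq_zero (f : ℂ) (r : Fin 2) {a b : Fin 2} (h : a ≠ b) :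
    transfer (krausOp f) r r a b = 0 := by
  fin_cases r <;> fin_cases a <;> fin_cases b <;> simp_all [transfer, krausOp]

theorem transfer_krausOp_rev_eq_zero (f : ℂ) {r a b : Fin 2} (h : (a, b) ≠ (r, r.rev)) :
    transfer (krausOp f) r r.rev a b = 0 := by
  fin_cases r <;> fin_cases a <;> fin_cases b <;> simp_all [transfer, krausOp]

theorem transfer4_krausOp_diag_eq_zero (f : ℂ) (c : Q4) {p q : Q4} (h : p ≠ q) :
    transfer4 (krausOp f) c c p q = 0 := by
  obtain ⟨p1, p2, p3, p4⟩ := p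
  obtain ⟨q1, q2, q3, q4⟩ := q
  simp only [ne_eq, Prod.mk.injEq, not_and_or] at h
  rcases h with h | h | h | h <;> simp [transfer4, transfer_krausOp_diag_eq_zero f _ h]

theorem transfer4_krausOp_flip_eq_zero (f : ℂ) (c : Q4) {p q : Q4}
    (h : (p, q) ≠ (c, bitFlip c)) : transfer4 (krausOp f) c (bitFlip c) p q = 0 := by
  obtain ⟨p1, p2, p3, p4⟩ := p
  obtain ⟨q1, q2, q3, q4⟩ := q
  have coord {r a b : Fin 2} (hne : transfer (krausOp f) r r.rev a b ≠ 0) : a = r ∧ b = r.rev :=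
    Prod.ext_iff.1 (not_imp_comm.1 (transfer_krausOp_rev_eq_zero f) hne)
  by_contra hne
  simp only [transfer4, bitFlip, mul_ne_zero_iff] at hne
  obtain ⟨⟨⟨h1, h2⟩, h3⟩, h4⟩ := hne
  obtain ⟨rfl, rfl⟩ := coord h1
  obtain ⟨rfl, rfl⟩ := coord h2
  obtain ⟨rfl, rfl⟩ := coord h3
  obtain ⟨rfl, rfl⟩ := coord h4
  exact h rfl

theorem eq_or_eq_of_v0L_ne_zero {c : Q4} (h : v0L c ≠ 0) :
    c = (0, 0, 0, 0) ∨ c = (1, 1, 1, 1) := by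
  contrapose! h
  simp [v0L, h.1, h.2]

theorem eq_or_eq_of_v1L_ne_zero {c : Q4} (h : v1L c ≠ 0) :
    c = (1, 1, 0, 0) ∨ c = (0, 0, 1, 1) := by
  contrapose! h
  simp [v1L, h.1, h.2]

theorem eq_or_eq_bitFlip_of_projP_ne_zero {c c' : Q4} (h : projP c c' ≠ 0) :
    c' = c ∨ c' = bitFlip c := by
  have hterm : v0L c * conj (v0L c') ≠ 0 ∨ v1L c * conj (v1L c') ≠ 0 := by
    by_contra! hz
    exact h (by rw [projP, hz.1, hz.2, add_zero])
  rcases hterm with hk | hk <;> obtain ⟨hc, hc'⟩ := mul_ne_zero_iff.1 hk <;>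
    rw [map_ne_zero] at hc'
  · rcases eq_or_eq_of_v0L_ne_zero hc with rfl | rfl <;>
      rcases eq_or_eq_of_v0L_ne_zero hc' with rfl | rfl <;> decide
  · rcases eq_or_eq_of_v1L_ne_zero hc with rfl | rfl <;>
      rcases eq_or_eq_of_v1L_ne_zero hc' with rfl | rfl <;> decide

theorem projP_mul_transfer4_krausOp_eq_zero (f : ℂ) {c c' p q : Q4} (hpq : p ≠ q)
    (h : (c, c') ≠ (p, q)) : projP c c' * transfer4 (krausOp f) c c' p q = 0 := by
  rcases eq_or_ne (projP c c') 0 with h0 | h0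
  · rw [h0, zero_mul]
  rcases eq_or_eq_bitFlip_of_projP_ne_zero h0 with rfl | rfl
  · rw [transfer4_krausOp_diag_eq_zero f c' hpq, mul_zero]
  · rw [transfer4_krausOp_flip_eq_zero f c h.symm, mul_zero]

theorem E4P_apply_of_ne (f : ℂ) {p q : Q4} (hpq : p ≠ q) :
    E4P f p q = projP p q * transfer4 (krausOp f) p q p q := by
  rw [E4P, sum_tens4_mul_mul_conjTranspose_apply, ← Fintype.sum_prod_type',
    Fintype.sum_eq_single (p, q)]
  rintro ⟨c, c'⟩ h
  exact projP_mul_transfer4_krausOp_eq_zero f hpq h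

theorem projP_apply_eq_zero {p q : Q4} (hpq : p ≠ q)
    (h1 : ¬(p = (0, 0, 0, 0) ∧ q = (1, 1, 1, 1))) (h2 : ¬(p = (1, 1, 1, 1) ∧ q = (0, 0, 0, 0)))
    (h3 : ¬(p = (1, 1, 0, 0) ∧ q = (0, 0, 1, 1))) (h4 : ¬(p = (0, 0, 1, 1) ∧ q = (1, 1, 0, 0))) :
    projP p q = 0 := by
  simp only [projP, v0L, v1L]
  split_ifs <;> simp_all

theorem projP_apply_coherence {p q : Q4}
    (h : (p = (0, 0, 0, 0) ∧ q = (1, 1, 1, 1)) ∨ (p = (1, 1, 0, 0) ∧ q = (0, 0, 1, 1))) :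
    projP p q = 2⁻¹ := by
  have hsqrt : ((Real.sqrt 2 : ℝ) : ℂ)⁻¹ * ((Real.sqrt 2 : ℝ) : ℂ)⁻¹ = 2⁻¹ := by
    rw [← mul_inv, ← Complex.ofReal_mul, Real.mul_self_sqrt zero_le_two, Complex.ofReal_ofNat]
  rcases h with ⟨rfl, rfl⟩ | ⟨rfl, rfl⟩ <;> simp [projP, v0L, v1L, hsqrt]

theorem E4P_apply_0000_1111 (f : ℂ) : E4P f (0, 0, 0, 0) (1, 1, 1, 1) = 2⁻¹ * conj f ^ 4 := by
  rw [E4P_apply_of_ne f (by decide), projP_apply_coherence (.inl ⟨rfl, rfl⟩)]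
  simp only [transfer4, transfer, krausOp, Fin.sum_univ_two, cons_val_zero, cons_val_one, cons_val',
    cons_val_fin_one, of_apply, map_zero, mul_zero, one_mul, add_zero]
  ring

theorem E4P_apply_1100_0011 (f : ℂ) :
    E4P f (1, 1, 0, 0) (0, 0, 1, 1) = 2⁻¹ * ((‖f‖ ^ 4 : ℝ) : ℂ) := by
  rw [E4P_apply_of_ne f (by decide), projP_apply_coherence (.inr ⟨rfl, rfl⟩)]
  simp only [transfer4, transfer, krausOp, Fin.sum_univ_two, cons_val_zero, cons_val_one, cons_val',
    cons_val_fin_one, of_apply, map_zero, map_one, mul_zero, mul_one, one_mul, add_zero]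
  rw [show f * f * conj f * conj f = (f * conj f) ^ 2 by ring, Complex.mul_conj']
  push_cast
  ring

theorem E4P_structure_general (f : ℂ) (Θ : ℝ)
    (hfΘ : f = (‖f‖ : ℂ) * Complex.exp (Complex.I * Θ)) :
    (∀ p q : Q4, p ≠ q →
      ¬(p = ((0 : Fin 2), (0 : Fin 2), (0 : Fin 2), (0 : Fin 2)) ∧
          q = ((1 : Fin 2), (1 : Fin 2), (1 : Fin 2), (1 : Fin 2))) →
      ¬(p = ((1 : Fin 2), (1 : Fin 2), (1 : Fin 2), (1 : Fin 2)) ∧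
          q = ((0 : Fin 2), (0 : Fin 2), (0 : Fin 2), (0 : Fin 2))) →
      ¬(p = ((1 : Fin 2), (1 : Fin 2), (0 : Fin 2), (0 : Fin 2)) ∧
          q = ((0 : Fin 2), (0 : Fin 2), (1 : Fin 2), (1 : Fin 2))) →
      ¬(p = ((0 : Fin 2), (0 : Fin 2), (1 : Fin 2), (1 : Fin 2)) ∧
          q = ((1 : Fin 2), (1 : Fin 2), (0 : Fin 2), (0 : Fin 2))) →
      E4P f p q = 0) ∧
    (∃ g : ℝ, 0 ≤ g ∧
      E4P f ((0 : Fin 2), (0 : Fin 2), (0 : Fin 2), (0 : Fin 2))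
            ((1 : Fin 2), (1 : Fin 2), (1 : Fin 2), (1 : Fin 2)) =
        Complex.exp (-(4 * (Θ : ℂ)) * Complex.I) * (g : ℂ)) ∧
    (∃ h : ℝ,
      E4P f ((1 : Fin 2), (1 : Fin 2), (0 : Fin 2), (0 : Fin 2))
            ((0 : Fin 2), (0 : Fin 2), (1 : Fin 2), (1 : Fin 2)) = (h : ℂ)) := by
  have hconj : conj f = ‖f‖ * Complex.exp (-(Θ : ℂ) * Complex.I) := by
    conv_lhs => rw [hfΘ]
    rw [map_mul, ← Complex.exp_conj, Complex.conj_ofReal, map_mul, Complex.conj_I,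
      Complex.conj_ofReal]
    ring_nf
  refine ⟨fun p q hpq h1 h2 h3 h4 => ?_, ⟨‖f‖ ^ 4 / 2, by positivity, ?_⟩, ⟨‖f‖ ^ 4 / 2, ?_⟩⟩
  · rw [E4P_apply_of_ne f hpq, projP_apply_eq_zero hpq h1 h2 h3 h4, zero_mul]
  · rw [E4P_apply_0000_1111, hconj, mul_pow, ← Complex.exp_nat_mul]
    push_cast
    ring_nf
  · rw [E4P_apply_1100_0011]
    push_cast
    ring

theorem E4P_structure (f : ℂ) (Θ : ℝ) (hf : ‖f‖ ≤ 1)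
    (hfΘ : f = (‖f‖ : ℂ) * Complex.exp (Complex.I * Θ)) :
    (∀ p q : Q4, p ≠ q →
      ¬(p = ((0 : Fin 2), (0 : Fin 2), (0 : Fin 2), (0 : Fin 2)) ∧
          q = ((1 : Fin 2), (1 : Fin 2), (1 : Fin 2), (1 : Fin 2))) →
      ¬(p = ((1 : Fin 2), (1 : Fin 2), (1 : Fin 2), (1 : Fin 2)) ∧
          q = ((0 : Fin 2), (0 : Fin 2), (0 : Fin 2), (0 : Fin 2))) →
      ¬(p = ((1 : Fin 2), (1 : Fin 2), (0 : Fin 2), (0 : Fin 2)) ∧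
          q = ((0 : Fin 2), (0 : Fin 2), (1 : Fin 2), (1 : Fin 2))) →
      ¬(p = ((0 : Fin 2), (0 : Fin 2), (1 : Fin 2), (1 : Fin 2)) ∧
          q = ((1 : Fin 2), (1 : Fin 2), (0 : Fin 2), (0 : Fin 2))) →
      E4P f p q = 0) ∧
    (∃ g : ℝ, 0 ≤ g ∧
      E4P f ((0 : Fin 2), (0 : Fin 2), (0 : Fin 2), (0 : Fin 2))
            ((1 : Fin 2), (1 : Fin 2), (1 : Fin 2), (1 : Fin 2)) =
        Complex.exp (-(4 * (Θ : ℂ)) * Complex.I) * (g : ℂ)) ∧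
    (∃ h : ℝ,
      E4P f ((1 : Fin 2), (1 : Fin 2), (0 : Fin 2), (0 : Fin 2))
            ((0 : Fin 2), (0 : Fin 2), (1 : Fin 2), (1 : Fin 2)) = (h : ℂ)) :=
  E4P_structure_general f Θ hfΘ
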